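/- Suppose q is an odd prime power and n is an even positive integer. Let a_1, …, a_n be an F_q-basis of F_{q^n}. Then the determinant det((Tr(a_i a_j))_{1 ≤ i,j ≤ n}) of the Gram matrix of the trace bilinear form is a nonzero non-square element of F_q. -/

import Mathlib

/-!
Write `q = #F` and let `M = (bᵢ ^ q ^ k)_{k,i}` be the Moore matrix of the basis. Since
`Tr(bᵢ bⱼ) = ∑ₖ bᵢ ^ q ^ k * bⱼ ^ q ^ k`, the Gram matrix is `Mᵀ M`, so `d = δ²` with `δ = det M`.
The discriminant of a separable extension is nonzero, so `δ ≠ 0`. The Frobenius `x ↦ x ^ q`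
cyclically permutes the `n` rows of `M`, and an `n`-cycle is odd for `n` even, so `δ ^ q = -δ`.
If `d` were a square `e²` in `F`, then `δ = ±e` would be fixed by Frobenius, forcing `δ = 0`
in odd characteristic.
-/

/-- The trace map of `F_{q^n}/F_q`, written explicitly as
`Tr(x) = x + x^q + ⋯ + x^{q^{n-1}}` (valued in the big field). -/
def qTr {K : Type*} [CommRing K] (q n : ℕ) (x : K) : K :=
  ∑ i ∈ Finset.range n, x ^ q ^ i

open Matrix

def mooreMatrix {K : Type*} [CommRing K] {n : ℕ} (q : ℕ) (v : Fin n → K) :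
    Matrix (Fin n) (Fin n) K :=
  of fun k i => v i ^ q ^ (k : ℕ)

theorem qTr_gram_eq_transpose_mooreMatrix_mul {K : Type*} [CommRing K] {n : ℕ} (q : ℕ) (v : Fin n → K) :
    of (fun i j => qTr q n (v i * v j)) = (mooreMatrix q v)ᵀ * mooreMatrix q v := by
  ext i j
  simp only [of_apply, mul_apply, transpose_apply, mooreMatrix, qTr, mul_pow]
  exact (Fin.sum_univ_eq_sum_range _ n).symm

theorem det_mooreMatrix_pow {K : Type*} [CommRing K] {q m : ℕ} (σ : K →+* K)
    (hσ : ∀ x, σ x = x ^ q) (v : Fin (m + 1) → K) (hv : ∀ i, v i ^ q ^ (m + 1) = v i) :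
    (mooreMatrix q v).det ^ q = (-1) ^ m * (mooreMatrix q v).det := by
  have hrotate : (mooreMatrix q v).map σ = (mooreMatrix q v).submatrix (finRotate (m + 1)) id := by
    ext k i
    simp only [map_apply, submatrix_apply, mooreMatrix, of_apply, id_eq, hσ, ← pow_mul,
      ← pow_succ, finRotate_apply]
    by_cases hk : k = Fin.last m
    · simp [hk, hv]
    · rw [Fin.val_add_one, if_neg hk]
  rw [← hσ, RingHom.map_det, RingHom.mapMatrix_apply, hrotate, det_permute, sign_finRotate]
  simp

theorem qTr_eq_algebraMap_trace (F : Type*) {K : Type*} [Field F] [Fintype F] [Field K] [Finite K]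
    [Algebra F K] (x : K) :
    qTr (Fintype.card F) (Module.finrank F K) x = algebraMap F K (Algebra.trace F K x) := by
  rw [FiniteField.algebraMap_trace_eq_sum_pow, qTr, Nat.card_eq_fintype_card]

theorem qTr_gram_eq_map_traceMatrix {F K : Type*} [Field F] [Fintype F] [Field K] [Finite K]
    [Algebra F K] {ι : Type*} (v : ι → K) :
    of (fun i j => qTr (Fintype.card F) (Module.finrank F K) (v i * v j))
      = (Algebra.traceMatrix F v).map (algebraMap F K) := by
  ext i j
  simp [qTr_eq_algebraMap_trace, Algebra.traceMatrix_apply]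

theorem two_ne_zero_of_odd_card {F : Type*} [Field F] [Fintype F] (hq : Odd (Fintype.card F)) :
    (2 : F) ≠ 0 :=
  Ring.two_ne_zero fun hchar =>
    Nat.not_even_iff_odd.mpr hq (Nat.even_iff.mpr (FiniteField.even_card_iff_char_two.mp hchar))

theorem not_isSquare_of_sq_eq_algebraMap {F K : Type*} [Field F] [Field K] [Algebra F K]
    {q : ℕ} (hq : Odd q) (hF : ∀ c : F, algebraMap F K c ^ q = algebraMap F K c)
    (h2 : (2 : K) ≠ 0) {δ : K} (hδ0 : δ ≠ 0) (hδ : δ ^ q = -δ) {d : F}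
    (hd : algebraMap F K d = δ ^ 2) : ¬ IsSquare d := by
  rintro ⟨e, rfl⟩
  have hfixed : δ ^ q = δ := by
    rw [map_mul, ← sq, eq_comm, sq_eq_sq_iff_eq_or_eq_neg] at hd
    rcases hd with h | h <;> rw [h]
    · exact hF e
    · rw [hq.neg_pow, hF]
  have : 2 * δ = 0 := by rw [two_mul, add_eq_zero_iff_eq_neg]; exact hfixed.symm.trans hδ
  exact hδ0 ((mul_eq_zero.mp this).resolve_left h2)

/-- For `q` odd and `n` even, the determinant of the Gram matrix
`(Tr(aᵢ aⱼ))_{i,j}` of the trace bilinear form in an `F_q`-basis `a₁, …, aₙ` of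
`F_{q^n}` is a nonzero non-square element of `F_q`. -/
theorem det_trace_gram_nonsquare
    {F K : Type*} [Field F] [Fintype F] [Field K] [Fintype K] [Algebra F K]
    {n : ℕ} (hq : Odd (Fintype.card F)) (hn : Module.finrank F K = n)
    (hne : Even n) (hn0 : 0 < n)
    (b : Module.Basis (Fin n) F K) (d : F)
    (hd : algebraMap F K d
      = (Matrix.of fun i j : Fin n => qTr (Fintype.card F) n (b i * b j)).det) :
    d ≠ 0 ∧ ¬ IsSquare d := by
  have hdiscr : d = Algebra.discr F b := by
    apply (algebraMap F K).injective
    subst hn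
    rw [hd, qTr_gram_eq_map_traceMatrix, ← RingHom.mapMatrix_apply, ← RingHom.map_det,
      Algebra.discr_def]
  have hδ : algebraMap F K d = (mooreMatrix (Fintype.card F) b).det ^ 2 := by
    rw [hd, qTr_gram_eq_transpose_mooreMatrix_mul, det_mul, det_transpose, sq]
  have hd0 : d ≠ 0 := hdiscr ▸ Algebra.discr_not_zero_of_basis F b
  refine ⟨hd0, ?_⟩
  obtain ⟨m, rfl⟩ : ∃ m, n = m + 1 := ⟨n - 1, by omega⟩
  have hm : Odd m := Nat.not_even_iff_odd.mp (Nat.even_add_one.mp hne)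
  have hcard : Fintype.card F ^ (m + 1) = Fintype.card K := by
    rw [← hn, Module.card_eq_pow_finrank (K := F) (V := K)]
  have hfrob : (mooreMatrix (Fintype.card F) b).det ^ Fintype.card F
      = -(mooreMatrix (Fintype.card F) b).det := by
    rw [det_mooreMatrix_pow (FiniteField.frobeniusAlgHom F K).toRingHom (fun _ => rfl) b
      (fun _ => by rw [hcard, FiniteField.pow_card]), hm.neg_one_pow, neg_one_mul]
  have h2 : (2 : K) ≠ 0 := by
    rw [← map_ofNat (algebraMap F K) 2]
    exact (map_ne_zero _).mpr (two_ne_zero_of_odd_card hq)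
  refine not_isSquare_of_sq_eq_algebraMap hq (fun c => by rw [← map_pow, FiniteField.pow_card])
    h2 (fun h0 => hd0 ?_) hfrob hδ
  rw [← (algebraMap F K).injective.eq_iff, hδ, h0, map_zero, zero_pow two_ne_zero]
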